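/- Let μ be the self-similar measure generated by the 2ℓ maps S_i. For every ℓ-adic interval I there exist nonnegative reals A(I) and B(I), depending only on I, such that for every ℓ-adic interval J: μ(IJ) = A(I) μ(J) + B(I) μ(T(J)), where IJ = I ∩ σ^{−n}(J) (n the generation of I) and T(x) = 1 − x. -/

import Mathlib

open MeasureTheory Filter Topology ENNReal

noncomputable section

/-- The ℓ-adic interval of generation `n` with index `k`. -/
def adicI (ℓ n k : ℕ) : Set ℝ := Set.Ico ((k : ℝ) / ℓ ^ n) ((k + 1 : ℝ) / ℓ ^ n)

/-- The mass of a set for a measure, as a real number. -/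
def mss (μ : Measure ℝ) (s : Set ℝ) : ℝ := (μ s).toReal

/-- The `2ℓ` similitudes of ratio `±1/ℓ`. -/
def simMapT (ℓ i : ℕ) (x : ℝ) : ℝ :=
  if i < ℓ then x / ℓ + i / ℓ else -x / ℓ + ((i - ℓ + 1 : ℕ) : ℝ) / ℓ

/-- The reflection `T(x) = 1 - x`. -/
def refl1 (x : ℝ) : ℝ := 1 - x

/-- The measure `ν = (μ + μ ∘ T)/2`. -/
def nuT (μ : Measure ℝ) : Measure ℝ := (2 : ℝ≥0∞)⁻¹ • (μ + μ.map refl1)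

/-- Partition-function sequence `u_n = ∑_{I ∈ F_n, m(I) ≠ 0} m(I)^q`. -/
def uSeq (ℓ : ℕ) (μ : Measure ℝ) (q : ℝ) (n : ℕ) : ℝ :=
  ∑ k ∈ (Finset.range (ℓ ^ n)).filter (fun k => mss μ (adicI ℓ n k) ≠ 0),
    mss μ (adicI ℓ n k) ^ q

/-- The `L^q`-spectrum `τ(q)` of a measure, defined with a `limsup`. -/
def Lsp (ℓ : ℕ) (μ : Measure ℝ) (q : ℝ) : ℝ :=
  limsup (fun n : ℕ => Real.log (uSeq ℓ μ q n) / (n * Real.log ℓ)) atTop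

/-- `‖M‖₁`: the sum of the first-row entries. -/
def normOne (M : Matrix (Fin 2) (Fin 2) ℝ) : ℝ := M 0 0 + M 0 1

/-- `‖M‖`: half of the sum of all entries. -/
def normH2 (M : Matrix (Fin 2) (Fin 2) ℝ) : ℝ := (M 0 0 + M 0 1 + M 1 0 + M 1 1) / 2

/-- The matrix `M_ε`. -/
def MmatT (ℓ : ℕ) (p : ℕ → ℝ) (ε : ℕ) : Matrix (Fin 2) (Fin 2) ℝ :=
  !![p ε, p (ε + ℓ); p (2 * ℓ - 1 - ε), p (ℓ - 1 - ε)]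

/-- The ℓ-adic interval `I_{ε₁⋯ε_n}` associated with a word. -/
def wordI (ℓ n : ℕ) (ε : Fin n → ℕ) : Set ℝ :=
  Set.Ico (∑ i : Fin n, (ε i : ℝ) / ℓ ^ ((i : ℕ) + 1))
    (∑ i : Fin n, (ε i : ℝ) / ℓ ^ ((i : ℕ) + 1) + 1 / ℓ ^ n)

/-- The ℓ-adic shift `σ(x) = ℓx (mod 1)`. -/
def shiftM (ℓ : ℕ) (x : ℝ) : ℝ := Int.fract (ℓ * x)

/-- `I_n(x)`: the ℓ-adic interval of generation `n` containing `x`. -/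
def Iofx (ℓ n : ℕ) (x : ℝ) : Set ℝ := adicI ℓ n (⌊(ℓ : ℝ) ^ n * x⌋).toNat

/-- The level set `E_α(m)` of points of `[0,1)` with local dimension `α`. -/
def ESet (ℓ : ℕ) (μ : Measure ℝ) (α : ℝ) : Set ℝ :=
  {x ∈ Set.Ico (0 : ℝ) 1 |
    Tendsto (fun n : ℕ => -Real.log (mss μ (Iofx ℓ n x)) / (n * Real.log ℓ)) atTop (𝓝 α)}

/-
Write `S_k` for `simMapT ℓ k` and `T` for `refl1`. Since `T ∘ S_ε = S_{2ℓ-1-ε}` and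
`S_{ε+ℓ} = S_ε ∘ T`, the self-similarity equation gives
`(μ(S_ε J), μ(T S_ε J)) = M_ε (μ(J), μ(T J))` for every ℓ-adic `J`, because only the two maps
`S_ε`, `S_{ε+ℓ}` reach `S_ε J` from the support. By induction,
`(μ(IJ), μ(T(IJ))) = M_{ε₁} ⋯ M_{εₙ} (μ(J), μ(T J))`, and `A(I)`, `B(I)` are the entries of the
first row of this nonnegative matrix.

The decomposition needs `μ` to give no mass to `(0,1)ᶜ`. Every `S_k` maps `[-ℓr, 1+ℓr]` into
`[-r, 1+r]`, so the mass outside `[-r, 1+r]` does not decrease when `r` is multiplied by `ℓ` and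
hence vanishes. The masses of the endpoints then satisfy `(μ{0}, μ{1}) = M_0 (μ{0}, μ{1})`, and
the rows of `M_0` sum to less than `1` because `p_{ℓ-1} + p_{2ℓ-1} > 0` and `p_0 + p_ℓ > 0`.
-/

open Set Matrix

def IsSelfSimilar (ℓ : ℕ) (p : ℕ → ℝ) (μ : Measure ℝ) : Prop :=
  μ = ∑ i ∈ Finset.range (2 * ℓ), ENNReal.ofReal (p i) • μ.map (simMapT ℓ i)

def massPair (μ : Measure ℝ) (s : Set ℝ) : Fin 2 → ℝ := ![mss μ s, mss μ (refl1 '' s)]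

theorem eq_zero_of_mulVec_eq_self {ι : Type*} [Fintype ι] {M : Matrix ι ι ℝ}
    (hM : ∀ i j, 0 ≤ M i j) (hrow : ∀ i, ∑ j, M i j < 1) {v : ι → ℝ} (hv : M *ᵥ v = v) :
    v = 0 := by
  by_contra hne
  obtain ⟨j₀, -⟩ := Function.ne_iff.1 hne
  have : Nonempty ι := ⟨j₀⟩
  obtain ⟨i, hi⟩ := Finite.exists_max fun j => |v j|
  have hle : |v i| ≤ (∑ j, M i j) * |v i| :=
    calc |v i| = |∑ j, M i j * v j| := by rw [← congrFun hv i]; rfl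
      _ ≤ ∑ j, |M i j * v j| := Finset.abs_sum_le_sum_abs _ _
      _ = ∑ j, M i j * |v j| := by simp only [abs_mul, abs_of_nonneg (hM i _)]
      _ ≤ ∑ j, M i j * |v i| :=
          Finset.sum_le_sum fun j _ => mul_le_mul_of_nonneg_left (hi j) (hM i j)
      _ = (∑ j, M i j) * |v i| := (Finset.sum_mul ..).symm
  have hvi : |v i| = 0 := by nlinarith [hrow i, abs_nonneg (v i)]
  exact hne (funext fun j => abs_nonpos_iff.1 (hvi ▸ hi j))

lemma eq_or_eq_add_of_mod_eq {ℓ k ε : ℕ} (hk : k < 2 * ℓ) (h : k % ℓ = ε) :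
    k = ε ∨ k = ε + ℓ := by
  rcases lt_or_ge k ℓ with hkℓ | hkℓ
  · rw [Nat.mod_eq_of_lt hkℓ] at h
    exact Or.inl h
  · rw [Nat.mod_eq_sub_mod hkℓ, Nat.mod_eq_of_lt (by omega)] at h
    exact Or.inr (by omega)

lemma refl1_involutive : Function.Involutive refl1 := fun x => by simp [refl1]

lemma image_refl1 (s : Set ℝ) : refl1 '' s = refl1 ⁻¹' s :=
  congrFun refl1_involutive.image_eq_preimage_symm s

section Maps

variable {ℓ k ε : ℕ}

lemma mul_simMapT (hk : k < 2 * ℓ) (x : ℝ) :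
    ℓ * simMapT ℓ k x = ((k % ℓ : ℕ) : ℝ) + if k < ℓ then x else 1 - x := by
  have hℓ : (ℓ : ℝ) ≠ 0 := by exact_mod_cast (show ℓ ≠ 0 by omega)
  unfold simMapT
  split_ifs with h
  · rw [Nat.mod_eq_of_lt h]
    field_simp
    ring
  · rw [Nat.mod_eq_sub_mod (not_lt.1 h), Nat.mod_eq_of_lt (by omega)]
    field_simp
    push_cast
    ring

lemma mul_simMapT_mem_Icc (hk : k < 2 * ℓ) {x : ℝ} (hx : x ∈ Icc 0 1) :
    ℓ * simMapT ℓ k x ∈ Icc ((k % ℓ : ℕ) : ℝ) ((k % ℓ : ℕ) + 1) := by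
  rw [mul_simMapT hk]
  split_ifs <;> constructor <;> linarith [hx.1, hx.2]

lemma mul_simMapT_mem_Ioo (hk : k < 2 * ℓ) {x : ℝ} (hx : x ∈ Ioo 0 1) :
    ℓ * simMapT ℓ k x ∈ Ioo ((k % ℓ : ℕ) : ℝ) ((k % ℓ : ℕ) + 1) := by
  rw [mul_simMapT hk]
  split_ifs <;> constructor <;> linarith [hx.1, hx.2]

lemma simMapT_injective (hk : k < 2 * ℓ) : Function.Injective (simMapT ℓ k) := by
  intro x y h
  have h' := congrArg ((ℓ : ℝ) * ·) h
  simp only [mul_simMapT hk] at h'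
  split_ifs at h' <;> linarith

lemma preimage_simMapT_image_subset {i : ℕ} (hk : k < 2 * ℓ) (hi : i < 2 * ℓ)
    (hki : k % ℓ ≠ i % ℓ) : simMapT ℓ k ⁻¹' (simMapT ℓ i '' Icc 0 1) ⊆ (Ioo 0 1)ᶜ := by
  rintro x ⟨z, hz, hzx⟩ hx
  have h₁ := mul_simMapT_mem_Ioo hk hx
  have h₂ := mul_simMapT_mem_Icc hi hz
  rw [← hzx] at h₁
  have hlt₁ : ((k % ℓ : ℕ) : ℝ) < (i % ℓ : ℕ) + 1 := h₁.1.trans_le h₂.2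
  have hlt₂ : ((i % ℓ : ℕ) : ℝ) < (k % ℓ : ℕ) + 1 := h₂.1.trans_lt h₁.2
  norm_cast at hlt₁ hlt₂
  omega

lemma mapsTo_simMapT_Icc (hk : k < 2 * ℓ) (r : ℝ) :
    MapsTo (simMapT ℓ k) (Icc (-(ℓ * r)) (1 + ℓ * r)) (Icc (-r) (1 + r)) := by
  intro x hx
  have hℓ : (0 : ℝ) < ℓ := by exact_mod_cast (show 0 < ℓ by omega)
  have hd : ((k % ℓ : ℕ) : ℝ) + 1 ≤ ℓ := by exact_mod_cast Nat.mod_lt k (by omega)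
  have hd₀ : (0 : ℝ) ≤ (k % ℓ : ℕ) := Nat.cast_nonneg _
  have h := mul_simMapT hk x
  have h₁ : ℓ * -r ≤ ℓ * simMapT ℓ k x := by
    rw [h]; split_ifs <;> linarith [hx.1, hx.2]
  have h₂ : ℓ * simMapT ℓ k x ≤ ℓ * (1 + r) := by
    rw [h]; split_ifs <;> linarith [hx.1, hx.2]
  exact ⟨le_of_mul_le_mul_left h₁ hℓ, le_of_mul_le_mul_left h₂ hℓ⟩

lemma simMapT_add_self (hε : ε < ℓ) : simMapT ℓ (ε + ℓ) = simMapT ℓ ε ∘ refl1 := by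
  have hℓ : (ℓ : ℝ) ≠ 0 := by exact_mod_cast (show ℓ ≠ 0 by omega)
  funext x
  apply mul_left_cancel₀ hℓ
  rw [Function.comp_apply, mul_simMapT (by omega), mul_simMapT (by omega), Nat.add_mod_right,
    if_neg (by omega), if_pos hε, refl1]

lemma refl1_comp_simMapT (hε : ε < ℓ) :
    refl1 ∘ simMapT ℓ ε = simMapT ℓ (ℓ - 1 - ε + ℓ) := by
  have hℓ : (ℓ : ℝ) ≠ 0 := by exact_mod_cast (show ℓ ≠ 0 by omega)
  have hcast : ((ℓ - 1 - ε : ℕ) : ℝ) = ℓ - 1 - ε := by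
    rw [Nat.sub_sub, Nat.cast_sub (by omega)]
    push_cast
    ring
  funext x
  apply mul_left_cancel₀ hℓ
  rw [Function.comp_apply, refl1, mul_sub, mul_simMapT (by omega), mul_simMapT (by omega),
    Nat.add_mod_right, Nat.mod_eq_of_lt hε, Nat.mod_eq_of_lt (show ℓ - 1 - ε < ℓ by omega),
    if_pos hε, if_neg (show ¬ ℓ - 1 - ε + ℓ < ℓ by omega), hcast]
  ring

end Maps

section SelfSimilar

variable {ℓ : ℕ} {p : ℕ → ℝ} {μ : Measure ℝ}

lemma IsSelfSimilar.measure_eq_sum (hself : IsSelfSimilar ℓ p μ) {E : Set ℝ}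
    (hE : MeasurableSet E) :
    μ E = ∑ i ∈ Finset.range (2 * ℓ), ENNReal.ofReal (p i) * μ (simMapT ℓ i ⁻¹' E) := by
  conv_lhs => rw [hself]
  rw [Measure.finsetSum_apply]
  refine Finset.sum_congr rfl fun i _ => ?_
  have hmeas : Measurable (simMapT ℓ i) := by unfold simMapT; split <;> fun_prop
  rw [Measure.smul_apply, smul_eq_mul, Measure.map_apply hmeas hE]

lemma IsSelfSimilar.measure_le (hp : ∀ i, 0 ≤ p i) (hsum : ∑ i ∈ Finset.range (2 * ℓ), p i = 1)
    (hself : IsSelfSimilar ℓ p μ) {E F : Set ℝ} (hE : MeasurableSet E)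
    (h : ∀ k < 2 * ℓ, simMapT ℓ k ⁻¹' E ⊆ F) : μ E ≤ μ F :=
  calc μ E = ∑ i ∈ Finset.range (2 * ℓ), ENNReal.ofReal (p i) * μ (simMapT ℓ i ⁻¹' E) :=
        hself.measure_eq_sum hE
    _ ≤ ∑ i ∈ Finset.range (2 * ℓ), ENNReal.ofReal (p i) * μ F :=
        Finset.sum_le_sum fun i hi => by gcongr; exact h i (Finset.mem_range.1 hi)
    _ = μ F := by
        rw [← Finset.sum_mul, ← ENNReal.ofReal_sum_of_nonneg fun i _ => hp i, hsum,
          ENNReal.ofReal_one, one_mul]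

lemma IsSelfSimilar.mss_eq [IsFiniteMeasure μ] (hp : ∀ i, 0 ≤ p i)
    (hself : IsSelfSimilar ℓ p μ) {N : Set ℝ} (hN : μ N = 0) {E : Set ℝ} (hE : MeasurableSet E)
    {ε : ℕ} (hε : ε < ℓ) (hout : ∀ k < 2 * ℓ, k % ℓ ≠ ε → simMapT ℓ k ⁻¹' E ⊆ N) :
    mss μ E = p ε * mss μ (simMapT ℓ ε ⁻¹' E) + p (ε + ℓ) * mss μ (simMapT ℓ (ε + ℓ) ⁻¹' E) := by
  have hsplit : μ E = ENNReal.ofReal (p ε) * μ (simMapT ℓ ε ⁻¹' E) +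
      ENNReal.ofReal (p (ε + ℓ)) * μ (simMapT ℓ (ε + ℓ) ⁻¹' E) := by
    rw [hself.measure_eq_sum hE]
    refine Finset.sum_eq_add_of_mem ε (ε + ℓ) (Finset.mem_range.2 (by omega))
      (Finset.mem_range.2 (by omega)) (by omega) fun k hk hne => ?_
    have hkε : k % ℓ ≠ ε := fun h => by
      rcases eq_or_eq_add_of_mod_eq (Finset.mem_range.1 hk) h with h | h
      exacts [hne.1 h, hne.2 h]
    rw [measure_mono_null (hout k (Finset.mem_range.1 hk) hkε) hN, mul_zero]
  rw [mss, hsplit, ENNReal.toReal_add (by finiteness) (by finiteness), ENNReal.toReal_mul,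
    ENNReal.toReal_mul, ENNReal.toReal_ofReal (hp _), ENNReal.toReal_ofReal (hp _)]
  rfl

lemma IsSelfSimilar.massPair_eq_mulVec [IsFiniteMeasure μ] (hp : ∀ i, 0 ≤ p i)
    (hself : IsSelfSimilar ℓ p μ) {N : Set ℝ} (hN : μ N = 0) {E : Set ℝ} (hE : MeasurableSet E)
    {ε : ℕ} (hε : ε < ℓ) (hout : ∀ k < 2 * ℓ, k % ℓ ≠ ε → simMapT ℓ k ⁻¹' E ⊆ N)
    (houtT : ∀ k < 2 * ℓ, k % ℓ ≠ ℓ - 1 - ε → simMapT ℓ k ⁻¹' (refl1 '' E) ⊆ N) :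
    massPair μ E = MmatT ℓ p ε *ᵥ massPair μ (simMapT ℓ ε ⁻¹' E) := by
  have hε' : ℓ - 1 - ε < ℓ := by omega
  have hTE : MeasurableSet (refl1 '' E) := by
    rw [image_refl1]
    exact (by unfold refl1; fun_prop : Measurable refl1) hE
  have h₁ := hself.mss_eq hp hN hE hε hout
  have h₂ := hself.mss_eq hp hN hTE hε' houtT
  rw [simMapT_add_self hε, preimage_comp, ← image_refl1] at h₁
  -- `T ∘ S_{ℓ-1-ε} = S_ε ∘ T` and `T ∘ S_{2ℓ-1-ε} = S_ε`
  rw [image_refl1, ← preimage_comp, ← preimage_comp, refl1_comp_simMapT hε',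
    show ℓ - 1 - (ℓ - 1 - ε) = ε by omega, simMapT_add_self hε, ← refl1_comp_simMapT hε,
    ← Function.comp_assoc, refl1_involutive.comp_self, Function.id_comp, preimage_comp,
    ← image_refl1, ← image_refl1] at h₂
  ext i
  fin_cases i
  · simp [massPair, MmatT, Matrix.mulVec, dotProduct, Fin.sum_univ_two, h₁]
  · simp [massPair, MmatT, Matrix.mulVec, dotProduct, Fin.sum_univ_two, h₂,
      show 2 * ℓ - 1 - ε = ℓ - 1 - ε + ℓ by omega, add_comm]

end SelfSimilar

section Support

variable {ℓ : ℕ} {p : ℕ → ℝ} {μ : Measure ℝ}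

lemma tendsto_measure_compl_Icc_neg_one_add [IsFiniteMeasure μ] :
    Tendsto (fun R : ℝ => μ (Icc (-R) (1 + R))ᶜ) atTop (𝓝 0) := by
  have hanti : Antitone fun R : ℝ => (Icc (-R) (1 + R))ᶜ := fun R R' h =>
    compl_subset_compl.2 (Icc_subset_Icc (by linarith) (by linarith))
  have hempty : ⋂ R : ℝ, (Icc (-R) (1 + R))ᶜ = ∅ := by
    rw [← compl_iUnion, compl_empty_iff, eq_univ_iff_forall]
    exact fun x => mem_iUnion.2 ⟨|x|, by constructor <;> linarith [neg_abs_le x, le_abs_self x]⟩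
  have h := tendsto_measure_iInter_atTop (μ := μ)
    (fun _ => measurableSet_Icc.compl.nullMeasurableSet) hanti ⟨0, measure_ne_top μ _⟩
  rwa [hempty, measure_empty] at h

lemma IsSelfSimilar.measure_compl_Icc_le_pow (hp : ∀ i, 0 ≤ p i)
    (hsum : ∑ i ∈ Finset.range (2 * ℓ), p i = 1) (hself : IsSelfSimilar ℓ p μ) (r : ℝ) (j : ℕ) :
    μ (Icc (-r) (1 + r))ᶜ ≤ μ (Icc (-(ℓ ^ j * r)) (1 + ℓ ^ j * r))ᶜ := by
  induction j with
  | zero => simp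
  | succ j ih =>
    refine ih.trans (hself.measure_le hp hsum measurableSet_Icc.compl fun k hk => ?_)
    rw [preimage_compl, pow_succ', mul_assoc]
    exact compl_subset_compl.2 (mapsTo_simMapT_Icc hk _)

lemma IsSelfSimilar.measure_compl_Icc [IsFiniteMeasure μ] (hℓ : 2 ≤ ℓ) (hp : ∀ i, 0 ≤ p i)
    (hsum : ∑ i ∈ Finset.range (2 * ℓ), p i = 1) (hself : IsSelfSimilar ℓ p μ) :
    μ (Icc 0 1)ᶜ = 0 := by
  have hℓ₁ : (1 : ℝ) < ℓ := by exact_mod_cast hℓ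
  have hthick : ∀ r > 0, μ (Icc (-r) (1 + r))ᶜ = 0 := fun r hr =>
    le_antisymm (ge_of_tendsto' (tendsto_measure_compl_Icc_neg_one_add.comp
      ((tendsto_pow_atTop_atTop_of_one_lt hℓ₁).atTop_mul_const hr))
      (hself.measure_compl_Icc_le_pow hp hsum r)) zero_le
  refine measure_mono_null (fun x hx => ?_)
    (measure_iUnion_null fun n : ℕ => hthick (1 / (n + 1)) Nat.one_div_pos_of_nat)
  simp only [mem_compl_iff, mem_Icc, not_and_or, not_le] at hx
  rcases hx with hx | hx
  · obtain ⟨n, hn⟩ := exists_nat_one_div_lt (neg_pos.2 hx)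
    exact mem_iUnion.2 ⟨n, fun h => by linarith [h.1]⟩
  · obtain ⟨n, hn⟩ := exists_nat_one_div_lt (sub_pos.2 hx)
    exact mem_iUnion.2 ⟨n, fun h => by linarith [h.2]⟩

lemma add_pair_sums_le_one (hp : ∀ i, 0 ≤ p i) (hsum : ∑ i ∈ Finset.range (2 * ℓ), p i = 1)
    {i j : ℕ} (hi : i < ℓ) (hj : j < ℓ) (hij : i ≠ j) :
    p i + p (i + ℓ) + (p j + p (j + ℓ)) ≤ 1 := by
  have hpairs : ∑ i ∈ Finset.range (2 * ℓ), p i = ∑ i ∈ Finset.range ℓ, (p i + p (i + ℓ)) := by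
    rw [two_mul, Finset.sum_range_add, ← Finset.sum_add_distrib]
    simp only [add_comm ℓ]
  rw [← hsum, hpairs]
  exact Finset.add_le_sum (f := fun k => p k + p (k + ℓ)) (fun k _ => add_nonneg (hp _) (hp _))
    (Finset.mem_range.2 hi) (Finset.mem_range.2 hj) hij

lemma MmatT_nonneg (hp : ∀ i, 0 ≤ p i) (ε : ℕ) (i j : Fin 2) : 0 ≤ MmatT ℓ p ε i j := by
  fin_cases i <;> fin_cases j <;> simp [MmatT, hp]

lemma MmatT_zero_row_sum_lt_one (hℓ : 2 ≤ ℓ) (hp : ∀ i, 0 ≤ p i)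
    (hsum : ∑ i ∈ Finset.range (2 * ℓ), p i = 1) (hpos : ∀ i < ℓ, 0 < p i + p (i + ℓ)) (i : Fin 2) :
    ∑ j, MmatT ℓ p 0 i j < 1 := by
  have hpair := add_pair_sums_le_one hp hsum (show 0 < ℓ by omega) (show ℓ - 1 < ℓ by omega)
    (by omega)
  have h₀ := hpos 0 (by omega)
  have h₁ := hpos (ℓ - 1) (by omega)
  rw [zero_add] at hpair h₀
  fin_cases i
  · simpa [MmatT, Fin.sum_univ_two] using (by linarith : p 0 + p ℓ < 1)
  · simpa [MmatT, Fin.sum_univ_two, show 2 * ℓ - 1 = ℓ - 1 + ℓ by omega]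
      using (by linarith : p (ℓ - 1 + ℓ) + p (ℓ - 1) < 1)

lemma refl1_image_singleton_zero : refl1 '' {0} = {1} := by
  rw [image_singleton, refl1, sub_zero]

lemma IsSelfSimilar.massPair_singleton_zero [IsFiniteMeasure μ] (hℓ : 2 ≤ ℓ) (hp : ∀ i, 0 ≤ p i)
    (hself : IsSelfSimilar ℓ p μ) (hIcc : μ (Icc 0 1)ᶜ = 0) :
    massPair μ {0} = MmatT ℓ p 0 *ᵥ massPair μ {0} := by
  have hℓ₀ : (0 : ℝ) < ℓ := by exact_mod_cast (show 0 < ℓ by omega)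
  have hout₀ : ∀ k < 2 * ℓ, k % ℓ ≠ 0 → simMapT ℓ k ⁻¹' {0} ⊆ (Icc 0 1)ᶜ := by
    intro k hk hk₀ x (hx : simMapT ℓ k x = 0) hxI
    have h := (mul_simMapT_mem_Icc hk hxI).1
    have hk₁ : (1 : ℝ) ≤ (k % ℓ : ℕ) := by exact_mod_cast Nat.one_le_iff_ne_zero.2 hk₀
    rw [hx, mul_zero] at h
    linarith
  have hout₁ : ∀ k < 2 * ℓ, k % ℓ ≠ ℓ - 1 - 0 → simMapT ℓ k ⁻¹' (refl1 '' {0}) ⊆ (Icc 0 1)ᶜ := by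
    intro k hk hk₁ x (hx : simMapT ℓ k x ∈ refl1 '' {0}) hxI
    rw [refl1_image_singleton_zero, mem_singleton_iff] at hx
    have h := (mul_simMapT_mem_Icc hk hxI).2
    have hlt : ((k % ℓ : ℕ) : ℝ) + 1 < ℓ := by
      have := Nat.mod_lt k (show 0 < ℓ by omega)
      exact_mod_cast (show k % ℓ + 1 < ℓ by omega)
    rw [hx, mul_one] at h
    linarith
  have hpre : simMapT ℓ 0 ⁻¹' {0} = {0} := by
    ext x
    simp [simMapT, show 0 < ℓ by omega, hℓ₀.ne']
  simpa only [hpre] using hself.massPair_eq_mulVec hp hIcc (measurableSet_singleton 0)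
    (show 0 < ℓ by omega) hout₀ hout₁

lemma IsSelfSimilar.measure_compl_Ioo [IsFiniteMeasure μ] (hℓ : 2 ≤ ℓ) (hp : ∀ i, 0 ≤ p i)
    (hsum : ∑ i ∈ Finset.range (2 * ℓ), p i = 1) (hpos : ∀ i < ℓ, 0 < p i + p (i + ℓ))
    (hself : IsSelfSimilar ℓ p μ) :
    μ (Ioo 0 1)ᶜ = 0 := by
  have hIcc := hself.measure_compl_Icc hℓ hp hsum
  have hzero := eq_zero_of_mulVec_eq_self (MmatT_nonneg hp 0)
    (MmatT_zero_row_sum_lt_one hℓ hp hsum hpos) (hself.massPair_singleton_zero hℓ hp hIcc).symm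
  have h₀ : mss μ {0} = 0 := congrFun hzero 0
  have h₁ : mss μ {1} = 0 := refl1_image_singleton_zero ▸ congrFun hzero 1
  rw [mss, ENNReal.toReal_eq_zero_iff] at h₀ h₁
  refine measure_mono_null (fun x hx => ?_) (measure_union_null (measure_union_null hIcc
    (h₀.resolve_right (measure_ne_top μ _))) (h₁.resolve_right (measure_ne_top μ _)))
  by_cases hx₀ : x = 0
  · exact Or.inl (Or.inr hx₀)
  by_cases hx₁ : x = 1
  · exact Or.inr hx₁
  refine Or.inl (Or.inl fun hxI => hx ⟨?_, ?_⟩)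
  exacts [lt_of_le_of_ne hxI.1 (Ne.symm hx₀), lt_of_le_of_ne hxI.2 hx₁]

end Support

section Intervals

variable {ℓ : ℕ} {p : ℕ → ℝ} {μ : Measure ℝ}

lemma adicI_subset_Icc {n m : ℕ} (hm : m < ℓ ^ n) : adicI ℓ n m ⊆ Icc 0 1 := by
  have hpow : (0 : ℝ) < ℓ ^ n := by exact_mod_cast Nat.zero_lt_of_lt hm
  have hm' : (m : ℝ) + 1 ≤ ℓ ^ n := by exact_mod_cast hm
  intro x hx
  exact ⟨(div_nonneg m.cast_nonneg hpow.le).trans hx.1,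
    hx.2.le.trans ((div_le_one hpow).2 hm')⟩

lemma adicI_succ_eq_image {ε : ℕ} (hε : ε < ℓ) (q m : ℕ) :
    adicI ℓ (q + 1) (ε * ℓ ^ q + m) = simMapT ℓ ε '' adicI ℓ q m := by
  have hℓ : (0 : ℝ) < ℓ := by exact_mod_cast Nat.zero_lt_of_lt hε
  have hpow : (0 : ℝ) < ℓ ^ q := by positivity
  have hS : ∀ x, simMapT ℓ ε x = (ε + x) / ℓ := fun x => by
    rw [eq_div_iff hℓ.ne', mul_comm, mul_simMapT (by omega), Nat.mod_eq_of_lt hε, if_pos hε]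
  have hend : ∀ c : ℝ, (ε * ℓ ^ q + c) / ℓ ^ (q + 1) = (ε + c / ℓ ^ q) / ℓ := fun c => by
    field_simp
    ring
  have hinv : Function.LeftInverse (fun y : ℝ => ℓ * y - ε) (simMapT ℓ ε) := fun x => by
    simp only [hS]
    field_simp
    ring
  have hinv' : Function.RightInverse (fun y : ℝ => ℓ * y - ε) (simMapT ℓ ε) := fun y => by
    simp only [hS]
    field_simp
    ring
  rw [image_eq_preimage_of_inverse hinv hinv']
  ext y
  simp only [adicI, mem_Ico, mem_preimage]
  push_cast
  rw [add_assoc, hend, hend, div_le_iff₀' hℓ, lt_div_iff₀' hℓ, le_sub_iff_add_le',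
    sub_lt_iff_lt_add']

lemma IsSelfSimilar.massPair_adicI_succ [IsFiniteMeasure μ] (hp : ∀ i, 0 ≤ p i)
    (hself : IsSelfSimilar ℓ p μ) (hnull : μ (Ioo 0 1)ᶜ = 0) {ε q m : ℕ} (hε : ε < ℓ)
    (hm : m < ℓ ^ q) :
    massPair μ (adicI ℓ (q + 1) (ε * ℓ ^ q + m)) = MmatT ℓ p ε *ᵥ massPair μ (adicI ℓ q m) := by
  have hJ := adicI_subset_Icc hm
  have hI := adicI_succ_eq_image hε q m
  have hpre : simMapT ℓ ε ⁻¹' adicI ℓ (q + 1) (ε * ℓ ^ q + m) = adicI ℓ q m := by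
    rw [hI, preimage_image_eq _ (simMapT_injective (by omega))]
  rw [← hpre]
  refine hself.massPair_eq_mulVec (E := adicI ℓ (q + 1) (ε * ℓ ^ q + m)) hp hnull
    measurableSet_Ico hε (fun k hk hkε => ?_) (fun k hk hkε => ?_)
  · rw [hI]
    exact (preimage_mono (image_mono hJ)).trans
      (preimage_simMapT_image_subset hk (by omega) (by rwa [Nat.mod_eq_of_lt hε]))
  · rw [hI, image_image, ← Function.comp_def refl1, refl1_comp_simMapT hε]
    exact (preimage_mono (image_mono hJ)).trans (preimage_simMapT_image_subset hk (by omega)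
      (by rwa [Nat.add_mod_right, Nat.mod_eq_of_lt (show ℓ - 1 - ε < ℓ by omega)]))

lemma IsSelfSimilar.exists_massPair_adicI_eq_mulVec [IsFiniteMeasure μ] (hp : ∀ i, 0 ≤ p i)
    (hself : IsSelfSimilar ℓ p μ) (hnull : μ (Ioo 0 1)ᶜ = 0) (n : ℕ) :
    ∀ k < ℓ ^ n, ∃ M : Matrix (Fin 2) (Fin 2) ℝ, (∀ i j, 0 ≤ M i j) ∧ ∀ q m, m < ℓ ^ q →
      massPair μ (adicI ℓ (n + q) (k * ℓ ^ q + m)) = M *ᵥ massPair μ (adicI ℓ q m) := by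
  induction n with
  | zero =>
    intro k hk
    obtain rfl : k = 0 := by simpa using hk
    refine ⟨1, fun i j => ?_, fun q m _ => by simp⟩
    rw [Matrix.one_apply]
    split_ifs <;> norm_num
  | succ n ih =>
    intro k hk
    have hℓ : 0 < ℓ := Nat.pos_of_ne_zero fun h => by simp [h] at hk
    have hε : k % ℓ < ℓ := Nat.mod_lt k hℓ
    obtain ⟨M, hM, hmass⟩ := ih (k / ℓ) (by rwa [Nat.div_lt_iff_lt_mul hℓ, ← pow_succ])
    refine ⟨M * MmatT ℓ p (k % ℓ), fun i j => ?_, fun q m hm => ?_⟩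
    · rw [Matrix.mul_apply]
      exact Finset.sum_nonneg fun l _ => mul_nonneg (hM i l) (MmatT_nonneg hp _ l j)
    · have hm' : k % ℓ * ℓ ^ q + m < ℓ ^ (q + 1) :=
        calc k % ℓ * ℓ ^ q + m < (k % ℓ + 1) * ℓ ^ q := by linarith
          _ ≤ ℓ * ℓ ^ q := Nat.mul_le_mul_right _ hε
          _ = ℓ ^ (q + 1) := (pow_succ' ℓ q).symm
      have hidx : k * ℓ ^ q + m = k / ℓ * ℓ ^ (q + 1) + (k % ℓ * ℓ ^ q + m) := by
        conv_lhs => rw [← Nat.div_add_mod k ℓ]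
        ring
      rw [show n + 1 + q = n + (q + 1) by omega, hidx, hmass (q + 1) _ hm',
        hself.massPair_adicI_succ hp hnull hε hm, Matrix.mulVec_mulVec]

end Intervals

/-- For each ℓ-adic interval `I` there are `A(I), B(I) ≥ 0` with
`μ(IJ) = A(I) μ(J) + B(I) μ(T(J))` for all ℓ-adic intervals `J`. -/
theorem stmt6 (ℓ : ℕ) (hℓ : 2 ≤ ℓ) (p : ℕ → ℝ) (hp : ∀ i, 0 ≤ p i)
    (hsum : ∑ i ∈ Finset.range (2 * ℓ), p i = 1)
    (hpos : ∀ i < ℓ, 0 < p i + p (i + ℓ))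
    (μ : Measure ℝ) [IsProbabilityMeasure μ]
    (hself : μ = ∑ i ∈ Finset.range (2 * ℓ), ENNReal.ofReal (p i) • μ.map (simMapT ℓ i))
    (n k : ℕ) (hk : k < ℓ ^ n) :
    ∃ A B : ℝ, 0 ≤ A ∧ 0 ≤ B ∧ ∀ (q m : ℕ), m < ℓ ^ q →
      mss μ (adicI ℓ (n + q) (k * ℓ ^ q + m)) =
        A * mss μ (adicI ℓ q m) + B * mss μ (refl1 '' adicI ℓ q m) := by
  have hss : IsSelfSimilar ℓ p μ := hself
  have hnull := hss.measure_compl_Ioo hℓ hp hsum hpos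
  obtain ⟨M, hM, hmass⟩ := hss.exists_massPair_adicI_eq_mulVec hp hnull n k hk
  refine ⟨M 0 0, M 0 1, hM 0 0, hM 0 1, fun q m hm => ?_⟩
  simpa [massPair, Matrix.mulVec, dotProduct, Fin.sum_univ_two] using congrFun (hmass q m hm) 0

end
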